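/- Let ε, μ, β be positive real constants and let E, H : ℝ × ℝ³ → ℝ³ be C¹ fields, j : ℝ × ℝ³ → ℝ³ and ρ : ℝ × ℝ³ → ℝ given sources satisfying the continuity equation ∂ₜρ + div j = 0. Define the biquaternionic operator M = β√(εμ) ∂ₜ D + √(εμ) ∂ₜ - iD and V = E - i√(μ/ε) H. Then V satisfies M V = -√(μ/ε) j - β√(μ/ε) ∂ₜρ + iρ/ε if and only if (E,H) satisfy the chiral Maxwell system: rot H = ε(∂ₜE + β ∂ₜ rot E) + j, rot E = -μ(∂ₜH + β ∂ₜ rot H), div E = ρ/ε, and div H = 0. -/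

import Mathlib

/-!
With `s = √(μ/ε)` and `V = E - i s H`, the identity `DV = -div V + rot V` splits `MV` into a
scalar and a vector biquaternion, and the real and imaginary parts of each give one real
equation. Since `√(εμ) = ε s` and `√(εμ) s = μ`, the two vector equations are exactly the
Ampère and Faraday laws, while the scalar ones read `div H = β (ε ∂ₜ div E - ∂ₜρ)` and
`div E + βμ ∂ₜ div H = ρ/ε`. Taking the divergence of Ampère's law, `div rot = 0` and the
continuity equation give `ε ∂ₜ div E = ∂ₜρ`; hence the first scalar equation is `div H = 0`, and
then the second is `div E = ρ/ε`.
-/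

noncomputable section

/-- ℝ³ -/
abbrev V3 := Fin 3 → ℝ
/-- Complex quaternions ℍ(ℂ) -/
abbrev HC := Quaternion ℂ

/-- partial derivative ∂ₖ of a function on ℝ³ -/
noncomputable def pd {E : Type*} [NormedAddCommGroup E] [NormedSpace ℝ E]
    (k : Fin 3) (g : V3 → E) (x : V3) : E :=
  fderiv ℝ g x (Pi.single k 1)

noncomputable def grad {E : Type*} [NormedAddCommGroup E] [NormedSpace ℝ E]
    (g : V3 → E) (x : V3) : Fin 3 → E := fun k => pd k g x

noncomputable def dvg {E : Type*} [NormedAddCommGroup E] [NormedSpace ℝ E]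
    (F : V3 → Fin 3 → E) (x : V3) : E :=
  pd 0 (fun y => F y 0) x + pd 1 (fun y => F y 1) x + pd 2 (fun y => F y 2) x

noncomputable def rot {E : Type*} [NormedAddCommGroup E] [NormedSpace ℝ E]
    (F : V3 → Fin 3 → E) (x : V3) : Fin 3 → E :=
  ![pd 1 (fun y => F y 2) x - pd 2 (fun y => F y 1) x,
    pd 2 (fun y => F y 0) x - pd 0 (fun y => F y 2) x,
    pd 0 (fun y => F y 1) x - pd 1 (fun y => F y 0) x]

/-- scalar Laplacian -/
noncomputable def lapS {E : Type*} [NormedAddCommGroup E] [NormedSpace ℝ E]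
    (g : V3 → E) (x : V3) : E :=
  pd 0 (pd 0 g) x + pd 1 (pd 1 g) x + pd 2 (pd 2 g) x

/-- purely vectorial quaternion from a ℂ³ vector -/
def vecq (v : Fin 3 → ℂ) : HC := ⟨0, v 0, v 1, v 2⟩
/-- scalar quaternion -/
def scq (a : ℂ) : HC := ⟨a, 0, 0, 0⟩

def e1 : HC := ⟨0,1,0,0⟩
def e2 : HC := ⟨0,0,1,0⟩
def e3 : HC := ⟨0,0,0,1⟩

/-- vector part of a quaternion, as a ℂ³ vector -/
def vecPart (a : HC) : Fin 3 → ℂ := ![a.imI, a.imJ, a.imK]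

/-- quaternionic conjugation C_H -/
def qconj (a : HC) : HC := ⟨a.re, -a.imI, -a.imJ, -a.imK⟩

/-- componentwise partial derivative of an ℍ(ℂ)-valued function -/
noncomputable def qpd (k : Fin 3) (F : V3 → HC) (x : V3) : HC :=
  ⟨pd k (fun y => (F y).re) x, pd k (fun y => (F y).imI) x,
   pd k (fun y => (F y).imJ) x, pd k (fun y => (F y).imK) x⟩

/-- The Moisil–Teodorescu (Dirac) operator D = Σₖ iₖ∂ₖ -/
noncomputable def Dq (F : V3 → HC) (x : V3) : HC :=
  e1 * qpd 0 F x + e2 * qpd 1 F x + e3 * qpd 2 F x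

/-- componentwise Laplacian of an ℍ(ℂ)-valued function -/
noncomputable def qlap (F : V3 → HC) (x : V3) : HC :=
  qpd 0 (qpd 0 F) x + qpd 1 (qpd 1 F) x + qpd 2 (qpd 2 F) x

/-- ContDiffOn for ℍ(ℂ)-valued functions, componentwise -/
def QContDiffOn (n : ℕ∞) (F : V3 → HC) (s : Set V3) : Prop :=
  ContDiffOn ℝ n (fun x => (F x).re) s ∧ ContDiffOn ℝ n (fun x => (F x).imI) s ∧
  ContDiffOn ℝ n (fun x => (F x).imJ) s ∧ ContDiffOn ℝ n (fun x => (F x).imK) s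

/-- euclidean norm on ℝ³ -/
noncomputable def nrm (x : V3) : ℝ := Real.sqrt (x 0 ^ 2 + x 1 ^ 2 + x 2 ^ 2)

/-- fundamental solution of the Helmholtz operator -/
noncomputable def theta (α : ℂ) (x : V3) : ℂ :=
  -Complex.exp (Complex.I * α * (nrm x : ℂ)) / (4 * Real.pi * (nrm x : ℂ))

/-- x as a purely vectorial quaternion -/
def xq (x : V3) : HC := vecq fun k => ((x k : ℝ) : ℂ)


/-- time derivative ∂ₜ for functions on ℝ × ℝ³ -/
noncomputable def pdt {E : Type*} [NormedAddCommGroup E] [NormedSpace ℝ E]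
    (g : ℝ × V3 → E) (p : ℝ × V3) : E :=
  fderiv ℝ g p (1, 0)

/-- componentwise time derivative of an ℍ(ℂ)-valued function -/
noncomputable def qpdt (F : ℝ × V3 → HC) (p : ℝ × V3) : HC :=
  ⟨pdt (fun q => (F q).re) p, pdt (fun q => (F q).imI) p,
   pdt (fun q => (F q).imJ) p, pdt (fun q => (F q).imK) p⟩

/-- the spatial Dirac operator acting on time-dependent quaternionic fields -/
noncomputable def DqT (F : ℝ × V3 → HC) (p : ℝ × V3) : HC :=
  Dq (fun y => F (p.1, y)) p.2

/-- spatial componentwise Laplacian for time-dependent quaternionic fields -/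
noncomputable def qlapT (F : ℝ × V3 → HC) (p : ℝ × V3) : HC :=
  qlap (fun y => F (p.1, y)) p.2

/-- componentwise smoothness of time-dependent quaternionic fields -/
def QCT (n : ℕ∞) (F : ℝ × V3 → HC) : Prop :=
  ContDiff ℝ n (fun p => (F p).re) ∧ ContDiff ℝ n (fun p => (F p).imI) ∧
  ContDiff ℝ n (fun p => (F p).imJ) ∧ ContDiff ℝ n (fun p => (F p).imK)

/-- The field V = E - i√(μ/ε)H as a purely vectorial biquaternion. -/
noncomputable def Vfield (ε μ : ℝ) (E H : ℝ × V3 → Fin 3 → ℝ) (p : ℝ × V3) : HC :=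
  vecq fun k => ((E p k : ℝ) : ℂ) - Complex.I * ((Real.sqrt (μ / ε) : ℝ) : ℂ) * ((H p k : ℝ) : ℂ)

/-- The chiral Maxwell operator M = β√(εμ)∂ₜD + √(εμ)∂ₜ - iD. -/
noncomputable def Mop (ε μ β : ℝ) (F : ℝ × V3 → HC) (p : ℝ × V3) : HC :=
  ((β * Real.sqrt (ε * μ) : ℝ) : ℂ) • qpdt (DqT F) p
    + ((Real.sqrt (ε * μ) : ℝ) : ℂ) • qpdt F p
    - Complex.I • DqT F p

open Filter Topology Complex

section LineDerivatives

variable {X F : Type*} [NormedAddCommGroup X] [NormedSpace ℝ X]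
  [NormedAddCommGroup F] [NormedSpace ℝ F]

lemma DifferentiableAt.hasDerivAt_comp_add_smul {f : X → F} {x v : X} {σ : ℝ}
    (hf : DifferentiableAt ℝ f (x + σ • v)) :
    HasDerivAt (fun τ : ℝ => f (x + τ • v)) (fderiv ℝ f (x + σ • v) v) σ :=
  hf.hasFDerivAt.comp_hasDerivAt σ (by simpa using ((hasDerivAt_id σ).smul_const v).const_add x)

lemma norm_sub_sub_le_of_fderiv_apply_eq {f g : X → F} {v : X} (hf : Differentiable ℝ f)
    (hfg : ∀ q, fderiv ℝ f q v = g q) {x w : X} {A : F} {C r t : ℝ}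
    (hg : ∀ σ, |σ| < r → ‖g (x + w + σ • v) - g (x + σ • v) - A‖ ≤ C) (ht : |t| < r) :
    ‖f (x + w + t • v) - f (x + t • v) - t • A - (f (x + w) - f x)‖ ≤ C * |t| := by
  have hderiv : ∀ σ ∈ Metric.ball (0 : ℝ) r, HasDerivWithinAt
      (fun σ : ℝ => f (x + w + σ • v) - f (x + σ • v) - σ • A)
      (g (x + w + σ • v) - g (x + σ • v) - A) (Metric.ball 0 r) σ := by
    intro σ _
    have h := ((hf (x + w + σ • v)).hasDerivAt_comp_add_smul.fun_sub
      (hf (x + σ • v)).hasDerivAt_comp_add_smul).fun_sub ((hasDerivAt_id σ).smul_const A)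
    rw [hfg, hfg, one_smul] at h
    exact h.hasDerivWithinAt
  have := Convex.norm_image_sub_le_of_norm_hasDerivWithin_le hderiv
    (fun σ hσ => hg σ (by simpa [Real.dist_eq] using hσ)) (convex_ball 0 r)
    (Metric.mem_ball_self ((abs_nonneg t).trans_lt ht)) (by simpa [Real.dist_eq] using ht)
  simpa [Real.norm_eq_abs] using this

lemma HasStrictFDerivAt.exists_norm_sub_sub_le {g : X → F} {g' : X →L[ℝ] F} {p : X}
    (hg : HasStrictFDerivAt g g' p) (v w : X) {ε : ℝ} (hε : 0 < ε) :
    ∃ r > 0, ∀ σ h : ℝ, |σ| < r → |h| < r →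
      ‖g (p + h • w + σ • v) - g (p + σ • v) - h • g' w‖ ≤ ε * ‖w‖ * |h| := by
  have hT : Tendsto (fun σh : ℝ × ℝ => (p + σh.2 • w + σh.1 • v, p + σh.1 • v)) (𝓝 0)
      (𝓝 (p, p)) := by
    have : Continuous (fun σh : ℝ × ℝ => (p + σh.2 • w + σh.1 • v, p + σh.1 • v)) := by fun_prop
    simpa using this.tendsto 0
  obtain ⟨r, hr, hball⟩ := Metric.eventually_nhds_iff.1 (hT.eventually (hg.isLittleO.def hε))
  refine ⟨r, hr, fun σ h hσ hh => ?_⟩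
  have := @hball (σ, h) (by simp [hσ, hh])
  simpa [norm_smul, Real.norm_eq_abs, mul_comm, mul_left_comm, mul_assoc] using this

/-- Schwarz's theorem `∂ᵥ (∂_w f) = ∂_w (∂ᵥ f)` assuming only that `∂ᵥ f` is strictly
differentiable at `p`, not that `f` is `C²` (`ε (E + β rot E)` is merely `C¹`). -/
theorem hasLineDerivAt_fderiv_apply {f g : X → F} {g' : X →L[ℝ] F} {p v : X}
    (hf : Differentiable ℝ f) (hfg : ∀ q, fderiv ℝ f q v = g q) (hg : HasStrictFDerivAt g g' p)
    (w : X) : HasLineDerivAt ℝ (fun q => fderiv ℝ f q w) (g' w) p v := by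
  rw [hasLineDerivAt_iff_isLittleO_nhds_zero, Asymptotics.isLittleO_iff]
  intro c hc
  set ε := c / (‖w‖ + 1)
  have hε : 0 < ε := by positivity
  have hεw : ε * ‖w‖ ≤ c := by
    rw [div_mul_eq_mul_div, div_le_iff₀ (by positivity)]; nlinarith [norm_nonneg w]
  obtain ⟨r, hr, hstrict⟩ := hg.exists_norm_sub_sub_le v w hε
  filter_upwards [Metric.ball_mem_nhds 0 hr] with t ht
  have ht' : |t| < r := by simpa [Real.dist_eq] using ht
  -- The quantity to bound is the derivative at `0` of `h ↦ Φ h` below, and the mean value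
  -- theorem in the direction `v` makes `Φ` be `ε ‖w‖ |t|`-Lipschitz at `0`.
  have hΦ : HasDerivAt (fun h : ℝ => f (p + t • v + h • w) - f (p + h • w) - (h * t) • g' w)
      (fderiv ℝ f (p + t • v) w - fderiv ℝ f p w - t • g' w) 0 := by
    have h1 := (hf _).hasDerivAt_comp_add_smul (x := p + t • v) (v := w) (σ := 0)
    have h2 := (hf _).hasDerivAt_comp_add_smul (x := p) (v := w) (σ := 0)
    have h3 := ((hasDerivAt_id (0 : ℝ)).mul_const t).smul_const (g' w)
    simpa using (h1.fun_sub h2).fun_sub h3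
  have hlip : ∀ᶠ h in 𝓝 (0 : ℝ),
      ‖(f (p + t • v + h • w) - f (p + h • w) - (h * t) • g' w)
        - (f (p + t • v + (0 : ℝ) • w) - f (p + (0 : ℝ) • w) - ((0 : ℝ) * t) • g' w)‖
        ≤ ε * ‖w‖ * |t| * ‖h - 0‖ := by
    filter_upwards [Metric.ball_mem_nhds 0 hr] with h hh
    have hsecond := norm_sub_sub_le_of_fderiv_apply_eq hf hfg (x := p) (w := h • w)
      (fun σ hσ => hstrict σ h hσ (by simpa [Real.dist_eq] using hh)) ht'
    rw [add_right_comm] at hsecond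
    calc _ = ‖f (p + t • v + h • w) - f (p + t • v) - t • h • g' w - (f (p + h • w) - f p)‖ := by
          congr 1; simp only [zero_smul, add_zero, zero_mul, mul_smul, smul_comm t h]; abel
      _ ≤ ε * ‖w‖ * |h| * |t| := hsecond
      _ = ε * ‖w‖ * |t| * ‖h - 0‖ := by rw [sub_zero, Real.norm_eq_abs]; ring
  calc ‖fderiv ℝ f (p + t • v) w - fderiv ℝ f p w - t • g' w‖ ≤ ε * ‖w‖ * |t| :=
        hΦ.le_of_lip' (by positivity) hlip
    _ ≤ c * ‖t‖ := by rw [Real.norm_eq_abs]; gcongr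

lemma fderiv_ofReal_sub_mul_ofReal {u w : X → ℝ} {x : X} (hu : DifferentiableAt ℝ u x)
    (hw : DifferentiableAt ℝ w x) (c : ℂ) (v : X) :
    fderiv ℝ (fun y => (u y : ℂ) - c * w y) x v = fderiv ℝ u x v - c * fderiv ℝ w x v := by
  have h : HasFDerivAt (fun y => (u y : ℂ) - c * w y)
      (ofRealCLM.comp (fderiv ℝ u x) - c • ofRealCLM.comp (fderiv ℝ w x)) x :=
    (ofRealCLM.hasFDerivAt.comp x hu.hasFDerivAt).sub
      ((ofRealCLM.hasFDerivAt.comp x hw.hasFDerivAt).const_mul c)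
  rw [h.fderiv]
  simp

end LineDerivatives

section Fields

variable {G : Type*} [NormedAddCommGroup G] [NormedSpace ℝ G]

def dvgT (F : ℝ × V3 → Fin 3 → G) (p : ℝ × V3) : G :=
  dvg (fun y => F (p.1, y)) p.2

def rotT (F : ℝ × V3 → Fin 3 → G) (p : ℝ × V3) : Fin 3 → G :=
  rot (fun y => F (p.1, y)) p.2

lemma DifferentiableAt.slice {u : ℝ × V3 → G} {p : ℝ × V3} (hu : DifferentiableAt ℝ u p) :
    DifferentiableAt ℝ (fun y => u (p.1, y)) p.2 :=
  hu.comp p.2 ((differentiableAt_const p.1).prodMk differentiableAt_id)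

lemma pd_slice {u : ℝ × V3 → G} {p : ℝ × V3} (hu : DifferentiableAt ℝ u p) (k : Fin 3) :
    pd k (fun y => u (p.1, y)) p.2 = fderiv ℝ u p (0, Pi.single k 1) := by
  have h : HasFDerivAt (fun y => u (p.1, y)) ((fderiv ℝ u p).comp (.inr ℝ ℝ V3)) p.2 :=
    hu.hasFDerivAt.comp p.2 (hasFDerivAt_prodMk_right p.1 p.2)
  rw [pd, h.fderiv]
  rfl

lemma pdt_apply {F : ℝ × V3 → Fin 3 → G} {p : ℝ × V3} (hF : DifferentiableAt ℝ F p) (i : Fin 3) :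
    pdt (fun q => F q i) p = pdt F p i := by
  rw [pdt, fderiv_apply hF]
  rfl

lemma contDiff_pd_slice {n : WithTop ℕ∞} {u : ℝ × V3 → G} (hu : ContDiff ℝ (n + 1) u)
    (k : Fin 3) : ContDiff ℝ n fun q : ℝ × V3 => pd k (fun y => u (q.1, y)) q.2 := by
  simp_rw [pd_slice (hu.differentiable (by simp) _)]
  exact (hu.fderiv_right le_rfl).clm_apply contDiff_const

lemma contDiff_dvgT {n : WithTop ℕ∞} {F : ℝ × V3 → Fin 3 → G} (hF : ContDiff ℝ (n + 1) F) :
    ContDiff ℝ n (dvgT F) := by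
  have h k := contDiff_pd_slice (contDiff_pi.1 hF k)
  exact ((h 0 0).add (h 1 1)).add (h 2 2)

lemma contDiff_rotT {n : WithTop ℕ∞} {F : ℝ × V3 → Fin 3 → G} (hF : ContDiff ℝ (n + 1) F) :
    ContDiff ℝ n (rotT F) := by
  have h k := contDiff_pd_slice (contDiff_pi.1 hF k)
  refine contDiff_pi.2 fun i => ?_
  fin_cases i
  exacts [(h 2 1).sub (h 1 2), (h 0 2).sub (h 2 0), (h 1 0).sub (h 0 1)]

lemma pd_pd_comm {g : V3 → G} (hg : ContDiff ℝ 2 g) (i j : Fin 3) (x : V3) :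
    pd i (pd j g) x = pd j (pd i g) x := by
  have key a b : pd a (pd b g) x = fderiv ℝ (fderiv ℝ g) x (Pi.single a 1) (Pi.single b 1) := by
    have hd : DifferentiableAt ℝ (fderiv ℝ g) x :=
      (hg.fderiv_right (m := 1) le_rfl).differentiable one_ne_zero x
    rw [pd, show pd b g = fun y => fderiv ℝ g y (Pi.single b 1) from rfl,
      fderiv_clm_apply hd (differentiableAt_const _)]
    simp
  rw [key, key]
  exact hg.contDiffAt.isSymmSndFDerivAt (by simp) _ _

lemma pd_sub {f g : V3 → G} {x : V3} (hf : DifferentiableAt ℝ f x) (hg : DifferentiableAt ℝ g x)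
    (k : Fin 3) : pd k (fun y => f y - g y) x = pd k f x - pd k g x := by
  rw [pd, pd, pd, fderiv_fun_sub hf hg]
  rfl

lemma dvg_rot_eq_zero {F : V3 → Fin 3 → G} (hF : ContDiff ℝ 2 F) (x : V3) :
    dvg (rot F) x = 0 := by
  have hc i : ContDiff ℝ 2 fun y => F y i := contDiff_pi.1 hF i
  have hd a b : DifferentiableAt ℝ (pd a fun y => F y b) x :=
    ((hc b).fderiv_right (m := 1) le_rfl).differentiable one_ne_zero x |>.clm_apply
      (differentiableAt_const _)
  simp only [dvg, rot, Matrix.cons_val]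
  rw [pd_sub (hd 1 2) (hd 2 1), pd_sub (hd 2 0) (hd 0 2), pd_sub (hd 0 1) (hd 1 0),
    pd_pd_comm (hc 2) 0 1, pd_pd_comm (hc 1) 0 2, pd_pd_comm (hc 0) 1 2]
  abel

lemma dvgT_rotT_eq_zero {F : ℝ × V3 → Fin 3 → G} (hF : ContDiff ℝ 2 F) (p : ℝ × V3) :
    dvgT (rotT F) p = 0 :=
  dvg_rot_eq_zero (hF.comp (contDiff_const.prodMk contDiff_id)) p.2

lemma dvgT_eq_sum {F : ℝ × V3 → Fin 3 → G} {p : ℝ × V3} (hF : DifferentiableAt ℝ F p) :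
    dvgT F p = ∑ k, fderiv ℝ F p (0, Pi.single k 1) k := by
  simp only [dvgT, dvg, Fin.sum_univ_three, pd_slice (differentiableAt_pi.1 hF _),
    fderiv_apply hF]
  rfl

end Fields

lemma hasLineDerivAt_dvgT {P Q : ℝ × V3 → Fin 3 → ℝ} (hP : Differentiable ℝ P)
    (hPQ : ∀ q, pdt P q = Q q) (hQ : ContDiff ℝ 1 Q) (p : ℝ × V3) :
    HasLineDerivAt ℝ (dvgT P) (dvgT Q p) p (1, 0) := by
  have hS k := hasLineDerivAt_fderiv_apply hP hPQ (hQ.hasStrictFDerivAt (x := p) one_ne_zero)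
    ((0 : ℝ), (Pi.single k 1 : V3))
  rw [show dvgT P = fun q => ∑ k, fderiv ℝ P q (0, Pi.single k 1) k from
    funext fun q => dvgT_eq_sum (hP q), dvgT_eq_sum (hQ.differentiable one_ne_zero p)]
  exact HasDerivAt.fun_sum fun k _ => hasDerivAt_pi.1 (hS k) k

/-- `∂ₜ (ε (E + β rot E)) = rot H - j`, and `div` kills both `rot E` and `rot H`. -/
lemma pdt_dvgT_of_ampere {ε β : ℝ} {E H j : ℝ × V3 → Fin 3 → ℝ} (hE : ContDiff ℝ 2 E)
    (hH : ContDiff ℝ 2 H) (hj : ContDiff ℝ 1 j)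
    (hamp : ∀ q, rotT H q = ε • (pdt E q + β • pdt (rotT E) q) + j q) (p : ℝ × V3) :
    ε * pdt (dvgT E) p + dvgT j p = 0 := by
  have hEd : Differentiable ℝ E := hE.differentiable two_ne_zero
  have hRd : Differentiable ℝ (rotT E) := (contDiff_rotT (n := 1) hE).differentiable one_ne_zero
  have hP q : HasFDerivAt (fun q => ε • (E q + β • rotT E q))
      (ε • (fderiv ℝ E q + β • fderiv ℝ (rotT E) q)) q :=
    ((hEd q).hasFDerivAt.add ((hRd q).hasFDerivAt.const_smul β)).const_smul ε
  have hPQ q : pdt (fun q => ε • (E q + β • rotT E q)) q = rotT H q - j q := by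
    rw [pdt, (hP q).fderiv, hamp q]
    simp [pdt]
  have hdivP : dvgT (fun q => ε • (E q + β • rotT E q)) = fun q => ε * dvgT E q := by
    funext q
    have h0 := dvgT_rotT_eq_zero hE q
    rw [dvgT_eq_sum (hRd q)] at h0
    rw [dvgT_eq_sum (hP q).differentiableAt, (hP q).fderiv, dvgT_eq_sum (hEd q)]
    simp only [_root_.smul_apply, _root_.add_apply, Pi.smul_apply,
      Pi.add_apply, smul_eq_mul, Finset.sum_add_distrib, ← Finset.mul_sum, h0]
    ring
  have hdivQ : dvgT (fun q => rotT H q - j q) p = -dvgT j p := by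
    have hRH : Differentiable ℝ (rotT H) := (contDiff_rotT (n := 1) hH).differentiable one_ne_zero
    have hjd : Differentiable ℝ j := hj.differentiable one_ne_zero
    have h0 := dvgT_rotT_eq_zero hH p
    rw [dvgT_eq_sum (hRH p)] at h0
    rw [dvgT_eq_sum ((hRH p).fun_sub (hjd p)), fderiv_fun_sub (hRH p) (hjd p),
      dvgT_eq_sum (hjd p)]
    simp only [_root_.sub_apply, Pi.sub_apply, Finset.sum_sub_distrib, h0]
    ring
  have h1 := hasLineDerivAt_dvgT (fun q => (hP q).differentiableAt) hPQ
    ((contDiff_rotT hH).sub hj) p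
  have h2 : HasLineDerivAt ℝ (fun q => ε * dvgT E q) (ε * pdt (dvgT E) p) p (1, 0) :=
    (((contDiff_dvgT (n := 1) hE).differentiable one_ne_zero p).hasFDerivAt.const_mul
      ε).hasLineDerivAt _
  rw [hdivP, hdivQ] at h1
  linarith [h1.unique h2]


lemma Dq_vecq (a : V3 → Fin 3 → ℂ) (x : V3) :
    Dq (fun y => vecq (a y)) x = scq (-dvg a x) + vecq (rot a x) := by
  ext <;> simp only [Dq, Quaternion.re_add, Quaternion.imI_add, Quaternion.imJ_add,
    Quaternion.imK_add, Quaternion.re_mul, Quaternion.imI_mul, Quaternion.imJ_mul,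
    Quaternion.imK_mul] <;> simp [qpd, vecq, scq, e1, e2, e3, dvg, rot, pd] <;> ring

lemma scq_add_vecq_inj {a a' : ℂ} {b b' : Fin 3 → ℂ} :
    scq a + vecq b = scq a' + vecq b' ↔ a = a' ∧ b = b' := by
  simp only [Quaternion.ext_iff, Quaternion.re_add, Quaternion.imI_add, Quaternion.imJ_add,
    Quaternion.imK_add, funext_iff, Fin.forall_fin_succ]
  simp [scq, vecq]

lemma qpdt_scq_add_vecq (a : ℝ × V3 → ℂ) (b : ℝ × V3 → Fin 3 → ℂ) (p : ℝ × V3) :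
    qpdt (fun q => scq (a q) + vecq (b q)) p
      = scq (pdt a p) + vecq fun k => pdt (fun q => b q k) p := by
  ext <;> simp only [qpdt, Quaternion.re_add, Quaternion.imI_add, Quaternion.imJ_add,
    Quaternion.imK_add] <;> simp [scq, vecq]

lemma qpdt_vecq (b : ℝ × V3 → Fin 3 → ℂ) (p : ℝ × V3) :
    qpdt (fun q => vecq (b q)) p = vecq fun k => pdt (fun q => b q k) p := by
  ext <;> simp [qpdt, vecq, pdt]

lemma Mop_vecq (ε μ β : ℝ) (v : ℝ × V3 → Fin 3 → ℂ) (p : ℝ × V3) :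
    Mop ε μ β (fun q => vecq (v q)) p
      = scq (-((β * Real.sqrt (ε * μ) : ℝ) : ℂ) * pdt (dvgT v) p + I * dvgT v p)
        + vecq fun k => ((β * Real.sqrt (ε * μ) : ℝ) : ℂ) * pdt (fun q => rotT v q k) p
          + (Real.sqrt (ε * μ) : ℂ) * pdt (fun q => v q k) p - I * rotT v p k := by
  have hD : DqT (fun q => vecq (v q)) = fun q => scq (-dvgT v q) + vecq (rotT v q) :=
    funext fun q => Dq_vecq _ q.2
  rw [Mop, hD, qpdt_scq_add_vecq, qpdt_vecq]
  ext <;> simp only [Quaternion.re_add, Quaternion.imI_add, Quaternion.imJ_add,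
    Quaternion.imK_add, Quaternion.re_sub, Quaternion.imI_sub, Quaternion.imJ_sub,
    Quaternion.imK_sub, Quaternion.re_smul, Quaternion.imI_smul, Quaternion.imJ_smul,
    Quaternion.imK_smul] <;> simp [scq, vecq, pdt]

lemma dvg_ofReal_sub_mul_ofReal {F G : V3 → Fin 3 → ℝ} {x : V3}
    (hF : ∀ k, DifferentiableAt ℝ (fun y => F y k) x)
    (hG : ∀ k, DifferentiableAt ℝ (fun y => G y k) x) (c : ℂ) :
    dvg (fun y k => (F y k : ℂ) - c * G y k) x = dvg F x - c * dvg G x := by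
  simp only [dvg, pd, fderiv_ofReal_sub_mul_ofReal (hF _) (hG _)]
  push_cast
  ring

lemma rot_ofReal_sub_mul_ofReal {F G : V3 → Fin 3 → ℝ} {x : V3}
    (hF : ∀ k, DifferentiableAt ℝ (fun y => F y k) x)
    (hG : ∀ k, DifferentiableAt ℝ (fun y => G y k) x) (c : ℂ) (k : Fin 3) :
    rot (fun y k => (F y k : ℂ) - c * G y k) x k = rot F x k - c * rot G x k := by
  fin_cases k <;> simp [rot, pd, fderiv_ofReal_sub_mul_ofReal (hF _) (hG _)] <;> ring

lemma pdt_ofReal_sub_mul_ofReal {u w : ℝ × V3 → ℝ} {p : ℝ × V3} (hu : DifferentiableAt ℝ u p)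
    (hw : DifferentiableAt ℝ w p) (c : ℂ) :
    pdt (fun q => (u q : ℂ) - c * w q) p = pdt u p - c * pdt w p :=
  fderiv_ofReal_sub_mul_ofReal hu hw c _

lemma Mop_ofReal_sub (ε μ β s : ℝ) {E H : ℝ × V3 → Fin 3 → ℝ} (hE : ContDiff ℝ 2 E)
    (hH : ContDiff ℝ 2 H) (p : ℝ × V3) :
    Mop ε μ β (fun q => vecq fun k => (E q k : ℂ) - I * s * H q k) p
      = scq (((-(β * Real.sqrt (ε * μ)) * pdt (dvgT E) p + s * dvgT H p : ℝ) : ℂ)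
          + I * ((β * Real.sqrt (ε * μ) * s * pdt (dvgT H) p + dvgT E p : ℝ) : ℂ))
        + vecq fun k =>
          ((((β * Real.sqrt (ε * μ)) • pdt (rotT E) p + Real.sqrt (ε * μ) • pdt E p
            - s • rotT H p) k : ℝ) : ℂ)
          + I * (((-((β * Real.sqrt (ε * μ) * s) • pdt (rotT H) p
            + (Real.sqrt (ε * μ) * s) • pdt H p + rotT E p)) k : ℝ) : ℂ) := by
  have hEd : Differentiable ℝ E := hE.differentiable two_ne_zero
  have hHd : Differentiable ℝ H := hH.differentiable two_ne_zero
  have hdE : Differentiable ℝ (dvgT E) := (contDiff_dvgT (n := 1) hE).differentiable one_ne_zero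
  have hdH : Differentiable ℝ (dvgT H) := (contDiff_dvgT (n := 1) hH).differentiable one_ne_zero
  have hRE : Differentiable ℝ (rotT E) := (contDiff_rotT (n := 1) hE).differentiable one_ne_zero
  have hRH : Differentiable ℝ (rotT H) := (contDiff_rotT (n := 1) hH).differentiable one_ne_zero
  have hslice {F : ℝ × V3 → Fin 3 → ℝ} (hF : Differentiable ℝ F) (q : ℝ × V3) (k : Fin 3) :
      DifferentiableAt ℝ (fun y => F (q.1, y) k) q.2 :=
    (differentiableAt_pi.1 (hF q) k).slice
  have hdiv : dvgT (fun q k => (E q k : ℂ) - I * s * H q k)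
      = fun q => ((dvgT E q : ℝ) : ℂ) - I * s * dvgT H q :=
    funext fun q => dvg_ofReal_sub_mul_ofReal (hslice hEd q) (hslice hHd q) _
  have hrot (q : ℝ × V3) (k : Fin 3) : rotT (fun q k => (E q k : ℂ) - I * s * H q k) q k
      = ((rotT E q k : ℝ) : ℂ) - I * s * rotT H q k :=
    rot_ofReal_sub_mul_ofReal (hslice hEd q) (hslice hHd q) _ k
  have hcomp {F : ℝ × V3 → Fin 3 → ℝ} (hF : Differentiable ℝ F) (k : Fin 3) :
      DifferentiableAt ℝ (fun q => F q k) p := differentiableAt_pi.1 (hF p) k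
  rw [Mop_vecq, hdiv]
  simp only [hrot, pdt_ofReal_sub_mul_ofReal (hdE p) (hdH p),
    pdt_ofReal_sub_mul_ofReal (hcomp hEd _) (hcomp hHd _),
    pdt_ofReal_sub_mul_ofReal (hcomp hRE _) (hcomp hRH _), pdt_apply (hEd p), pdt_apply (hHd p),
    pdt_apply (hRE p), pdt_apply (hRH p)]
  congr 1
  · congr 1
    push_cast
    linear_combination (-(s * dvgT H p : ℂ)) * I_sq
  · congr 1
    funext k
    simp only [Pi.add_apply, Pi.sub_apply, Pi.neg_apply, Pi.smul_apply, smul_eq_mul]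
    push_cast
    linear_combination (s * rotT H p k : ℂ) * I_sq

lemma ofReal_add_I_mul_eq_iff {a b a' b' : ℝ} :
    (a : ℂ) + I * b = a' + I * b' ↔ a = a' ∧ b = b' := by
  simp [Complex.ext_iff]

lemma pi_ofReal_add_I_mul_eq_ofReal_iff {ι : Type*} {U W V : ι → ℝ} :
    (fun k => (U k : ℂ) + I * W k) = (fun k => (V k : ℂ)) ↔ U = V ∧ W = 0 := by
  simp [funext_iff, Complex.ext_iff, forall_and]

lemma Mop_Vfield_eq_iff {ε μ : ℝ} (β : ℝ) (hε : 0 < ε) (hμ : 0 < μ) {E H : ℝ × V3 → Fin 3 → ℝ}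
    (hE : ContDiff ℝ 2 E) (hH : ContDiff ℝ 2 H) (J : Fin 3 → ℝ) (r r' : ℝ) (p : ℝ × V3) :
    Mop ε μ β (Vfield ε μ E H) p
        = scq (((-(β * Real.sqrt (μ / ε)) * r' : ℝ) : ℂ) + I * ((r / ε : ℝ) : ℂ))
          + vecq (fun k => ((-(Real.sqrt (μ / ε)) * J k : ℝ) : ℂ))
      ↔ (rotT H p = ε • (pdt E p + β • pdt (rotT E) p) + J
          ∧ rotT E p = -(μ • (pdt H p + β • pdt (rotT H) p)))
        ∧ dvgT H p = β * (ε * pdt (dvgT E) p - r') ∧ dvgT E p + β * μ * pdt (dvgT H) p = r / ε := by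
  set s := Real.sqrt (μ / ε)
  have hs : 0 < s := Real.sqrt_pos.2 (div_pos hμ hε)
  have hss : s * s = μ / ε := Real.mul_self_sqrt (div_pos hμ hε).le
  have hcs : ε * s * s = μ := by rw [mul_assoc, hss]; field_simp
  have hc : Real.sqrt (ε * μ) = ε * s := by
    rw [Real.sqrt_eq_iff_mul_self_eq (by positivity) (by positivity)]
    linear_combination -ε * hcs
  rw [show Vfield ε μ E H = fun q => vecq fun k => (E q k : ℂ) - I * s * H q k from rfl,
    Mop_ofReal_sub _ _ _ _ hE hH, scq_add_vecq_inj, ofReal_add_I_mul_eq_iff,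
    pi_ofReal_add_I_mul_eq_ofReal_iff, hc, ← hcs]
  constructor
  · rintro ⟨⟨hA, hB⟩, hU, hW⟩
    change _ = -s • J at hU
    refine ⟨⟨?_, ?_⟩, ?_, ?_⟩
    · apply smul_right_injective _ hs.ne'
      linear_combination (norm := module) -hU
    · linear_combination (norm := module) -hW
    · apply mul_left_cancel₀ hs.ne'
      linear_combination hA
    · linear_combination hB
  · rintro ⟨⟨hM1, hM2⟩, hS1, hS2⟩
    refine ⟨⟨?_, ?_⟩, ?_, ?_⟩
    · rw [hS1]; ring
    · rw [← hS2]; ring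
    · change _ = -s • J
      rw [hM1]; module
    · rw [hM2]; module

theorem stmt6_general (ε μ β : ℝ) (hε : 0 < ε) (hμ : 0 < μ)
    (E H j : ℝ × V3 → Fin 3 → ℝ) (ρ : ℝ × V3 → ℝ)
    (hE : ∀ k, ContDiff ℝ 2 fun p => E p k) (hH : ∀ k, ContDiff ℝ 2 fun p => H p k)
    (hj : ∀ k, ContDiff ℝ 1 fun p => j p k)
    (hcont : ∀ p : ℝ × V3, pdt ρ p + dvg (fun y => j (p.1, y)) p.2 = 0) :
    (∀ p : ℝ × V3,
      Mop ε μ β (Vfield ε μ E H) p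
        = scq (((-(β * Real.sqrt (μ / ε)) * pdt ρ p : ℝ) : ℂ)
            + Complex.I * ((ρ p / ε : ℝ) : ℂ))
          + vecq fun k => ((-(Real.sqrt (μ / ε)) * j p k : ℝ) : ℂ))
    ↔
    (∀ p : ℝ × V3,
      (rot (fun y => H (p.1, y)) p.2
        = ε • (pdt E p + β • pdt (fun q => rot (fun y => E (q.1, y)) q.2) p) + j p) ∧
      (rot (fun y => E (p.1, y)) p.2
        = -(μ • (pdt H p + β • pdt (fun q => rot (fun y => H (q.1, y)) q.2) p))) ∧
      dvg (fun y => E (p.1, y)) p.2 = ρ p / ε ∧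
      dvg (fun y => H (p.1, y)) p.2 = 0) := by
  have hE' : ContDiff ℝ 2 E := contDiff_pi.2 hE
  have hH' : ContDiff ℝ 2 H := contDiff_pi.2 hH
  simp only [Mop_Vfield_eq_iff β hε hμ hE' hH']
  constructor
  · intro h
    have hgaussH (p : ℝ × V3) : dvgT H p = 0 := by
      have hcharge := pdt_dvgT_of_ampere hE' hH' (contDiff_pi.2 hj) (fun q => (h q).1.1) p
      have hcont' : pdt ρ p + dvgT j p = 0 := hcont p
      rw [(h p).2.1, show ε * pdt (dvgT E) p - pdt ρ p = 0 by linarith, mul_zero]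
    have hgaussE (p : ℝ × V3) : dvgT E p = ρ p / ε := by
      simpa [funext hgaussH, pdt] using (h p).2.2
    exact fun p => ⟨(h p).1.1, (h p).1.2, hgaussE p, hgaussH p⟩
  · intro h p
    have hdE : Differentiable ℝ (dvgT E) :=
      (contDiff_dvgT (n := 1) hE').differentiable one_ne_zero
    have hρ : ρ = fun q => ε * dvgT E q :=
      funext fun q => by rw [show dvgT E q = ρ q / ε from (h q).2.2.1]; field_simp
    have hρ' : pdt ρ p = ε * pdt (dvgT E) p := by
      rw [hρ, pdt, fderiv_const_mul (hdE p)]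
      rfl
    have hgaussH : dvgT H = 0 := funext fun q => (h q).2.2.2
    refine ⟨⟨(h p).1, (h p).2.1⟩, by simp [hgaussH, hρ'], ?_⟩
    rw [hgaussH, show dvgT E p = ρ p / ε from (h p).2.2.1]
    simp [pdt]

/-- MV = -√(μ/ε)j - β√(μ/ε)∂ₜρ + iρ/ε is equivalent to the
time-dependent chiral Maxwell system. -/
theorem stmt6 (ε μ β : ℝ) (hε : 0 < ε) (hμ : 0 < μ) (hβ : 0 < β)
    (E H j : ℝ × V3 → Fin 3 → ℝ) (ρ : ℝ × V3 → ℝ)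
    (hE : ∀ k, ContDiff ℝ 2 fun p => E p k) (hH : ∀ k, ContDiff ℝ 2 fun p => H p k)
    (hj : ∀ k, ContDiff ℝ 1 fun p => j p k) (hρ : ContDiff ℝ 1 ρ)
    (hcont : ∀ p : ℝ × V3, pdt ρ p + dvg (fun y => j (p.1, y)) p.2 = 0) :
    (∀ p : ℝ × V3,
      Mop ε μ β (Vfield ε μ E H) p
        = scq (((-(β * Real.sqrt (μ / ε)) * pdt ρ p : ℝ) : ℂ)
            + Complex.I * ((ρ p / ε : ℝ) : ℂ))
          + vecq fun k => ((-(Real.sqrt (μ / ε)) * j p k : ℝ) : ℂ))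
    ↔
    (∀ p : ℝ × V3,
      (rot (fun y => H (p.1, y)) p.2
        = ε • (pdt E p + β • pdt (fun q => rot (fun y => E (q.1, y)) q.2) p) + j p) ∧
      (rot (fun y => E (p.1, y)) p.2
        = -(μ • (pdt H p + β • pdt (fun q => rot (fun y => H (q.1, y)) q.2) p))) ∧
      dvg (fun y => E (p.1, y)) p.2 = ρ p / ε ∧
      dvg (fun y => H (p.1, y)) p.2 = 0) :=
  stmt6_general ε μ β hε hμ E H j ρ hE hH hj hcont
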